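/- arXiv:1702.08474 — 4 statements merged into one kernel-verified Lean document; each statement's English description precedes it below -/
import Mathlib

section
/- Let D ≥ 2 and let n_1, ..., n_D be nonnegative reals. Then (Σ_{j=1}^D j·n_j) ≤ (D - 1/2) · (Σ_{j=1}^{D-2} n_j + 2·n_D + max(0, n_{D-1} - n_D)). -/
open scoped BigOperators

/-- The upper bound inequality for the MOO algorithm on layered graphs of depth `D`. -/
theorem stmt_3 (D : ℕ) (hD : 2 ≤ D) (n : ℕ → ℝ) (hn : ∀ j, 0 ≤ n j) :
    ∑ j ∈ Finset.Icc 1 D, (j : ℝ) * n j ≤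
      ((D : ℝ) - 1/2) *
        ((∑ j ∈ Finset.Icc 1 (D - 2), n j) + 2 * n D + max 0 (n (D - 1) - n D)) := by
  obtain ⟨k, rfl⟩ := Nat.exists_eq_add_of_le hD
  have h2 : 2 + k - 2 = k := by omega
  have h1 : 2 + k - 1 = k + 1 := by omega
  rw [h2, h1]
  have e : 2 + k = (k + 1) + 1 := by omega
  rw [e, Finset.sum_Icc_succ_top (by omega), Finset.sum_Icc_succ_top (by omega)]
  have hsum : ∑ j ∈ Finset.Icc 1 k, (j : ℝ) * n j ≤
      ((k : ℝ) + 3/2) * ∑ j ∈ Finset.Icc 1 k, n j := by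
    rw [Finset.mul_sum]
    apply Finset.sum_le_sum
    intro j hj
    have hjk : (j : ℝ) ≤ k := by
      exact_mod_cast (Finset.mem_Icc.mp hj).2
    nlinarith [hn j]
  have hS : 0 ≤ ∑ j ∈ Finset.Icc 1 k, n j :=
    Finset.sum_nonneg fun j _ => hn j
  push_cast
  rcases le_total (n (k + 1)) (n (k + 1 + 1)) with h | h
  · have hmax : (0 : ℝ) ≤ max 0 (n (k + 1) - n (k + 1 + 1)) := le_max_left _ _
    nlinarith [hn (k+1), hn (k+1+1)]
  · have hmax : n (k + 1) - n (k + 1 + 1) ≤ max 0 (n (k + 1) - n (k + 1 + 1)) := le_max_right _ _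
    nlinarith [hn (k+1), hn (k+1+1)]
end

section
/- Let n ≥ 2 and let s_2, ..., s_n be reals with s_i ≥ 1 for all i. Let f = ⌊n / (2 + 2·log₂(Π_{i=2}^n s_i))⌋. Then for every i with 1 ≤ i ≤ f, the number of indices j with 1 ≤ j ≤ n - i and Π_{k=j+1}^{j+i} s_k ≤ 2 is at least (n - i)/2. -/
open scoped BigOperators Classical


private lemma aux_one_le_prod (t : Finset ℕ) (f : ℕ → ℝ) (h : ∀ k ∈ t, 1 ≤ f k) :
    1 ≤ ∏ k ∈ t, f k := by
  calc (1:ℝ) = ∏ _k ∈ t, (1:ℝ) := by simp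
    _ ≤ ∏ k ∈ t, f k := Finset.prod_le_prod (by intros; norm_num) h

private lemma aux_prod_subset_le (U t : Finset ℕ) (f : ℕ → ℝ) (hsub : U ⊆ t)
    (h : ∀ k ∈ t, 1 ≤ f k) : ∏ k ∈ U, f k ≤ ∏ k ∈ t, f k := by
  rw [← Finset.prod_sdiff hsub]
  have h1 : 1 ≤ ∏ k ∈ t \ U, f k :=
    aux_one_le_prod _ _ (fun k hk => h k (Finset.mem_sdiff.mp hk).1)
  have h2 : 0 ≤ ∏ k ∈ U, f k :=
    le_trans zero_le_one (aux_one_le_prod _ _ fun k hk => h k (hsub hk))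
  nlinarith

/-- Pigeonhole lemma: if `f = ⌊n / (2 + 2 log₂ Π s_i)⌋`, then for each `1 ≤ i ≤ f`,
at least half of the indices `j ∈ {1, …, n-i}` satisfy `Π_{k=j+1}^{j+i} s_k ≤ 2`. -/
theorem stmt_7 (n : ℕ) (hn : 2 ≤ n) (s : ℕ → ℝ)
    (hs : ∀ i, 2 ≤ i → i ≤ n → 1 ≤ s i) :
    ∀ i : ℕ, 1 ≤ i →
      (i : ℤ) ≤ ⌊(n : ℝ) / (2 + 2 * Real.logb 2 (∏ m ∈ Finset.Icc 2 n, s m))⌋ →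
      ((n : ℝ) - i) / 2 ≤
        (((Finset.Icc 1 (n - i)).filter
            (fun j => (∏ k ∈ Finset.Icc (j + 1) (j + i), s k) ≤ 2)).card : ℝ) := by
  intro i hi1 hif
  set P := ∏ m ∈ Finset.Icc 2 n, s m with hPdef
  have hP1 : 1 ≤ P := by
    rw [hPdef]
    exact aux_one_le_prod _ _ fun m hm => by
      have h := Finset.mem_Icc.mp hm; exact hs m h.1 h.2
  set L := Real.logb 2 P with hLdef
  have hL0 : 0 ≤ L := Real.logb_nonneg one_lt_two hP1
  have hden : (0:ℝ) < 2 + 2*L := by linarith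
  have hiR : (i:ℝ) ≤ (n:ℝ) / (2 + 2*L) := by
    have h1 : ((i:ℤ):ℝ) ≤ ((⌊(n:ℝ)/(2+2*L)⌋ : ℤ) : ℝ) := by exact_mod_cast hif
    have h2 := Int.floor_le ((n:ℝ)/(2+2*L))
    push_cast at h1
    linarith
  have hkey : (i:ℝ) * (2 + 2*L) ≤ n := by
    rw [le_div_iff₀ hden] at hiR; exact hiR
  have hi0 : (0:ℝ) ≤ i := Nat.cast_nonneg i
  have hinR : (i:ℝ) ≤ n := by nlinarith [mul_nonneg hi0 hL0]
  have hin : i ≤ n := by exact_mod_cast hinR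
  set T := Finset.Icc 1 (n - i) with hTdef
  set G := T.filter (fun j => (∏ k ∈ Finset.Icc (j+1) (j+i), s k) ≤ 2) with hGdef
  set B := T.filter (fun j => ¬ (∏ k ∈ Finset.Icc (j+1) (j+i), s k) ≤ 2) with hBdef
  have hGB : G.card + B.card = n - i := by
    rw [hGdef, hBdef, Finset.card_filter_add_card_filter_not, hTdef,
      Nat.card_Icc]
    omega
  -- bound on each residue class of B
  have hBr : ∀ r : ℕ, ((B.filter (fun j => j % i = r)).card : ℝ) ≤ L := by
    intro r
    set C := B.filter (fun j => j % i = r) with hCdef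
    have hCmem : ∀ j ∈ C, 1 ≤ j ∧ j ≤ n - i ∧ j % i = r := by
      intro j hj
      rw [hCdef, Finset.mem_filter, hBdef, Finset.mem_filter, hTdef,
        Finset.mem_Icc] at hj
      exact ⟨hj.1.1.1, hj.1.1.2, hj.2⟩
    have hdisj : (C : Set ℕ).PairwiseDisjoint (fun j => Finset.Icc (j+1) (j+i)) := by
      intro j1 h1 j2 h2 hne
      have key : ∀ a b : ℕ, a ∈ C → b ∈ C → a < b → a + i ≤ b := by
        intro a b ha hb hab
        have hmod : a % i = b % i := ((hCmem a ha).2.2).trans ((hCmem b hb).2.2).symm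
        have hdvd : i ∣ b - a := (Nat.modEq_iff_dvd' (le_of_lt hab)).mp hmod
        have hle : i ≤ b - a := Nat.le_of_dvd (by omega) hdvd
        omega
      simp only [Finset.disjoint_left, Finset.mem_Icc]
      rcases lt_or_gt_of_ne hne with h | h
      · have := key j1 j2 h1 h2 h; intro k hk hk'; omega
      · have := key j2 j1 h2 h1 h; intro k hk hk'; omega
    have h2pow : (2:ℝ)^C.card ≤ P := by
      have step1 : (2:ℝ)^C.card = ∏ _j ∈ C, (2:ℝ) := by
        rw [Finset.prod_const]
      have step2 : ∏ _j ∈ C, (2:ℝ) ≤ ∏ j ∈ C, ∏ k ∈ Finset.Icc (j+1) (j+i), s k := by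
        apply Finset.prod_le_prod (fun j _ => by norm_num)
        intro j hj
        have hjB : j ∈ B := (Finset.mem_filter.mp hj).1
        have := (Finset.mem_filter.mp hjB).2
        linarith [lt_of_not_ge this]
      have step3 : ∏ j ∈ C, ∏ k ∈ Finset.Icc (j+1) (j+i), s k
          = ∏ k ∈ C.biUnion (fun j => Finset.Icc (j+1) (j+i)), s k :=
        (Finset.prod_biUnion hdisj).symm
      have hsub : C.biUnion (fun j => Finset.Icc (j+1) (j+i)) ⊆ Finset.Icc 2 n := by
        intro k hk
        rw [Finset.mem_biUnion] at hk
        obtain ⟨j, hj, hkj⟩ := hk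
        have hj' := hCmem j hj
        rw [Finset.mem_Icc] at hkj ⊢
        omega
      have step4 : ∏ k ∈ C.biUnion (fun j => Finset.Icc (j+1) (j+i)), s k ≤ P := by
        rw [hPdef]
        exact aux_prod_subset_le _ _ _ hsub
          (fun k hk => by
            have h := Finset.mem_Icc.mp hk
            exact hs k h.1 h.2)
      linarith [step2, step3 ▸ step2]
    have hPpos : (0:ℝ) < P := by linarith
    have : ((C.card : ℝ)) ≤ Real.logb 2 P := by
      rw [Real.le_logb_iff_rpow_le one_lt_two hPpos]
      calc (2:ℝ) ^ (C.card : ℝ) = (2:ℝ) ^ (C.card : ℕ) := by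
            rw [Real.rpow_natCast]
        _ ≤ P := h2pow
    exact this
  -- sum over residue classes
  have hi0' : 0 < i := hi1
  have hcardB : B.card = ∑ r ∈ Finset.range i, (B.filter (fun j => j % i = r)).card :=
    Finset.card_eq_sum_card_fiberwise (fun j _ => Finset.mem_range.mpr (Nat.mod_lt j hi0'))
  have hBbound : (B.card : ℝ) ≤ i * L := by
    rw [hcardB]
    push_cast
    calc ∑ r ∈ Finset.range i, ((B.filter (fun j => j % i = r)).card : ℝ)
        ≤ ∑ _r ∈ Finset.range i, L := Finset.sum_le_sum (fun r _ => hBr r)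
      _ = i * L := by rw [Finset.sum_const, Finset.card_range, nsmul_eq_mul]
  have hcast : ((n - i : ℕ) : ℝ) = (n:ℝ) - i := by
    rw [Nat.cast_sub hin]
  have hGBR : (G.card : ℝ) + B.card = (n:ℝ) - i := by
    rw [← hcast]; exact_mod_cast hGB
  -- final arithmetic: i*(2+2L) ≤ n  ⟹  2iL ≤ n - i - i ≤ n - i... need 2iL ≤ n - i
  have : 2 * ((i:ℝ) * L) ≤ (n:ℝ) - i := by nlinarith
  have hfinal : ((n:ℝ) - i)/2 ≤ (G.card : ℝ) := by linarith
  exact hfinal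
end

section
/- Fix ρ ≥ 1, ε > 0, and integers h ≥ 1, k with k ≥ (1 + 1/ε)·ρ·h. Let n ≥ 1 and let O_0, O_1, ..., O_n be nonnegative reals, and define w_0 = 0 and w_{i+1} = ε·O_i/h for 0 ≤ i ≤ n-1. Then 2·Σ_{i=0}^{n-1} (ρ·(O_i + h·w_i) - k·w_i) + ρ·(O_n + h·w_n) ≤ (3 + ε)·ρ·Σ_{i=0}^{n} O_i. -/
open scoped BigOperators

/-- The telescoping inequality in the reduction from the `(h,k)`-server problem to
the infinite server problem. -/
theorem stmt_10 (ρ ε : ℝ) (hρ : 1 ≤ ρ) (hε : 0 < ε) (h k : ℕ) (hh : 1 ≤ h)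
    (hk : (1 + 1 / ε) * ρ * h ≤ (k : ℝ)) (n : ℕ) (hn : 1 ≤ n)
    (O : ℕ → ℝ) (hO : ∀ i, i ≤ n → 0 ≤ O i)
    (w : ℕ → ℝ) (hw0 : w 0 = 0) (hw : ∀ i, i ≤ n - 1 → w (i + 1) = ε * O i / h) :
    2 * ∑ i ∈ Finset.range n, (ρ * (O i + h * w i) - k * w i) + ρ * (O n + h * w n)
      ≤ (3 + ε) * ρ * ∑ i ∈ Finset.range (n + 1), O i := by
  obtain ⟨m, rfl⟩ : ∃ m, n = m + 1 := ⟨n - 1, (Nat.succ_pred_eq_of_pos hn).symm⟩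
  have hρ0 : (0:ℝ) < ρ := lt_of_lt_of_le one_pos hρ
  have hh0 : (0:ℝ) < h := by exact_mod_cast hh
  have hwsimp : ∀ i ≤ m, w (i + 1) = ε * O i / h := by
    intro i hi; exact hw i (by simpa using hi)
  have hsum : ∀ i ∈ Finset.range (m + 1),
      ρ * (O i + h * w i) - k * w i = ρ * O i + (ρ * h - k) * w i := by
    intro i _; ring
  rw [Finset.sum_congr rfl hsum, Finset.sum_add_distrib,
    Finset.sum_range_succ' (fun i => (ρ * h - k) * w i) m]
  have hT : ∑ i ∈ Finset.range m, (ρ * h - k) * w (i + 1)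
      ≤ -ρ * ∑ i ∈ Finset.range m, O i := by
    rw [Finset.mul_sum]
    apply Finset.sum_le_sum
    intro i hi
    have hi' : i ≤ m := Nat.le_of_lt_succ (Nat.lt_succ_of_lt (Finset.mem_range.mp hi))
    rw [hwsimp i hi']
    have hOi : 0 ≤ O i := hO i (by omega)
    have hcoef : ρ * h - k ≤ -(ρ * h / ε) := by
      have h1 : (1 + 1 / ε) * ρ * h = ρ * h + ρ * h / ε := by field_simp
      rw [h1] at hk; linarith
    have hx : 0 ≤ ε * O i / h := by positivity
    calc (ρ * h - k) * (ε * O i / h) ≤ -(ρ * h / ε) * (ε * O i / h) :=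
          mul_le_mul_of_nonneg_right hcoef hx
      _ = -ρ * O i := by field_simp
  rw [hw0, Finset.sum_range_succ (fun i => ρ * O i) m,
    Finset.sum_range_succ O (m + 1), Finset.sum_range_succ O m,
    hwsimp m le_rfl]
  have hOm : 0 ≤ O m := hO m (by omega)
  have hOm1 : 0 ≤ O (m + 1) := hO (m + 1) (by omega)
  have hS0 : 0 ≤ ∑ i ∈ Finset.range m, O i :=
    Finset.sum_nonneg fun i hi => hO i (by have := Finset.mem_range.mp hi; omega)
  have hhw : (h:ℝ) * (ε * O m / h) = ε * O m := by field_simp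
  rw [hhw]
  have hms : ∑ x ∈ Finset.range m, ρ * O x = ρ * ∑ x ∈ Finset.range m, O x :=
    (Finset.mul_sum _ _ _).symm
  nlinarith [hT, hms, mul_nonneg hρ0.le hS0, mul_nonneg hρ0.le hOm,
    mul_nonneg hρ0.le hOm1, mul_nonneg hε.le (mul_nonneg hρ0.le hS0),
    mul_nonneg hε.le (mul_nonneg hρ0.le hOm1)]
end

section
/- Suppose for every n ∈ ℕ there is a metric space M_n with basepoint s_n on which a certain online problem (serving requests in M_n with all servers starting at s_n, cost = total distance moved) is not n-competitive. Then the wedge sum metric space M obtained by gluing all s_n to a single point s (with d(x,y) = d(x,s_n) + d(s_m, y) for x ∈ M_n, y ∈ M_m, n ≠ m) admits no competitive algorithm. -/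
/-- Cost of serving a list of (request, chosen server index) pairs starting from the
server configuration `conf` (server `i` stands at `conf i`); the chosen server moves
to the request (lazy serving, which is without loss of generality). -/
noncomputable def serveCost {M : Type*} [MetricSpace M] : (ℕ → M) → List (M × ℕ) → ℝ
  | _, [] => 0
  | conf, (r, i) :: rest => dist (conf i) r + serveCost (Function.update conf i r) rest

/-- The choices an online algorithm `A` makes on the request sequence `σ`:
the `t`-th choice is made knowing only the first `t+1` requests. -/
def algChoices {M : Type*} (A : List M → ℕ) (σ : List M) : List ℕ :=
  (List.range σ.length).map fun t => A (σ.take (t + 1))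

/-- Cost of the online algorithm `A` on `σ`, with all servers starting at `s`. -/
noncomputable def algCost {M : Type*} [MetricSpace M] (s : M) (A : List M → ℕ)
    (σ : List M) : ℝ :=
  serveCost (fun _ => s) (σ.zip (algChoices A σ))

/-- Optimal (offline) cost of serving `σ` with all servers starting at `s`. -/
noncomputable def optCost {M : Type*} [MetricSpace M] (s : M) (σ : List M) : ℝ :=
  sInf {c : ℝ | ∃ ch : List ℕ, ch.length = σ.length ∧
    c = serveCost (fun _ => s) (σ.zip ch)}

/-- `A` is `ρ`-competitive for the infinite server problem on `(M, s)`. -/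
def IsCompetitiveWith {M : Type*} [MetricSpace M] (s : M) (A : List M → ℕ) (ρ : ℝ) :
    Prop :=
  ∃ c : ℝ, ∀ σ : List M, algCost s A σ ≤ ρ * optCost s σ + c

lemma serveCost_nonneg {M : Type*} [MetricSpace M] (conf : ℕ → M) (l : List (M × ℕ)) :
    0 ≤ serveCost conf l := by
  induction l generalizing conf with
  | nil => simp [serveCost]
  | cons p rest ih =>
    obtain ⟨r, i⟩ := p
    simp only [serveCost]
    have := ih (Function.update conf i r)
    positivity

lemma serveCost_map {M N : Type*} [MetricSpace M] [MetricSpace N] (f : M → N)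
    (hf : ∀ x y, dist (f x) (f y) = dist x y) :
    ∀ (σ : List M) (ch : List ℕ) (conf : ℕ → M),
      serveCost (f ∘ conf) ((σ.map f).zip ch) = serveCost conf (σ.zip ch) := by
  intro σ
  induction σ with
  | nil => intro ch conf; simp [serveCost]
  | cons r rest ih =>
    intro ch conf
    cases ch with
    | nil => simp [serveCost]
    | cons i ch' =>
      simp only [List.map_cons, List.zip_cons_cons, serveCost, Function.comp_apply]
      have hupd : Function.update (f ∘ conf) i (f r) = f ∘ Function.update conf i r := by
        funext j
        by_cases h : j = i <;> simp [Function.update, h]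
      rw [hf, hupd]
      exact congrArg (dist (conf i) r + ·) (ih ch' (Function.update conf i r))

lemma optCost_map {M N : Type*} [MetricSpace M] [MetricSpace N] (f : M → N)
    (hf : ∀ x y, dist (f x) (f y) = dist x y) (s : M) (σ : List M) :
    optCost (f s) (σ.map f) = optCost s σ := by
  unfold optCost
  congr 1
  ext c
  constructor
  · rintro ⟨ch, hlen, rfl⟩
    exact ⟨ch, by simpa using hlen, by
      rw [show (fun _ : ℕ => f s) = f ∘ (fun _ => s) from rfl, serveCost_map f hf]⟩
  · rintro ⟨ch, hlen, rfl⟩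
    exact ⟨ch, by simpa using hlen, by
      rw [show (fun _ : ℕ => f s) = f ∘ (fun _ => s) from rfl, serveCost_map f hf]⟩

lemma optCost_nonneg {M : Type*} [MetricSpace M] (s : M) (σ : List M) :
    0 ≤ optCost s σ := by
  apply Real.sInf_nonneg
  rintro c ⟨ch, _, rfl⟩
  exact serveCost_nonneg _ _

lemma algChoices_map {M N : Type*} (f : M → N) (A : List N → ℕ) (σ : List M) :
    algChoices (fun l => A (l.map f)) σ = algChoices A (σ.map f) := by
  unfold algChoices
  simp [List.map_take]

/-- If for every `n` there is a pointed metric space `(M n, s n)` on which the infinite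
server problem is not `n`-competitive, then the wedge sum of the spaces `(M n, s n)`
(a space `W` containing isometric copies of the `M n` glued at a common source `sW`,
with `dist (e m x) (e n y) = dist x (s m) + dist (s n) y` across distinct summands)
admits no competitive algorithm. -/
theorem stmt_17 (M : ℕ → Type) [∀ n, MetricSpace (M n)] (s : ∀ n, M n)
    (hbad : ∀ n : ℕ, ∀ A : List (M n) → ℕ, ¬ IsCompetitiveWith (s n) A (n : ℝ))
    (W : Type) [MetricSpace W] (sW : W) (e : ∀ n, M n → W)
    (hbase : ∀ n, e n (s n) = sW)
    (hiso : ∀ n (x y : M n), dist (e n x) (e n y) = dist x y)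
    (hcross : ∀ m n, m ≠ n → ∀ (x : M m) (y : M n),
      dist (e m x) (e n y) = dist x (s m) + dist (s n) y)
    (hcover : ∀ w : W, w = sW ∨ ∃ n x, w = e n x) :
    ∀ A : List W → ℕ, ¬ ∃ ρ : ℝ, IsCompetitiveWith sW A ρ := by
  intro A ⟨ρ, c, hcomp⟩
  set n := ⌈ρ⌉₊ with hn
  apply hbad n (fun l => A (l.map (e n)))
  refine ⟨c, fun σ => ?_⟩
  have halg : algCost (s n) (fun l => A (l.map (e n))) σ = algCost sW A (σ.map (e n)) := by
    unfold algCost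
    rw [algChoices_map]
    rw [← hbase n, show (fun _ : ℕ => e n (s n)) = (e n) ∘ (fun _ => s n) from rfl,
      serveCost_map (e n) (hiso n)]
  have hopt : optCost sW (σ.map (e n)) = optCost (s n) σ := by
    rw [← hbase n]; exact optCost_map (e n) (hiso n) (s n) σ
  calc algCost (s n) (fun l => A (l.map (e n))) σ
      = algCost sW A (σ.map (e n)) := halg
    _ ≤ ρ * optCost sW (σ.map (e n)) + c := hcomp _
    _ = ρ * optCost (s n) σ + c := by rw [hopt]
    _ ≤ (n : ℝ) * optCost (s n) σ + c := by
        gcongr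
        · exact optCost_nonneg _ _
        · exact Nat.le_ceil ρ
end
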